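/- Let K be a CM field with totally real subfield F, ζ ∈ K^× with ζ̄ = -ζ and φ(ζ)·i > 0 for all φ ∈ Φ (a CM type), and let I be a fractional O_K-ideal with ζ I Ī = 𝔇^{-1}_{K/Q}. Define λ(x,y) = Tr_{K/Q}(ζ x ȳ) on K ⊗ R. Then λ is an alternating Z-bilinear form on I, the dual lattice of I with respect to λ equals I itself (λ is a perfect pairing I × I → Z), and λ(i·x, x) > 0 for all nonzero x in K ⊗ R ≅ C^Φ. -/

import Mathlib

open NumberField

/- STATEMENT 11: K a CM field with conjugation σ, ζ ∈ K^× with σζ = -ζ and φ(ζ)·i > 0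
for all φ in the CM type Φ, and I a fractional O_K-ideal with ζ·I·Ī = 𝔇^{-1}.  The form
λ(x,y) = Tr_{K/Q}(ζ x σ(y)) is alternating, the λ-dual lattice of I is I itself, and
the associated symmetric form λ(i·x, x) on K ⊗ ℝ ≅ ℂ^Φ is positive definite (expressed
via the embeddings: λ(i·x,x) = 2 Σ_{φ∈Φ} (-(Im φζ))·|φ x|² > 0 for x ≠ 0). -/
theorem stmt_11 {K : Type*} [Field K] [NumberField K]
    (σ : K ≃+* K) (hσ2 : ∀ x : K, σ (σ x) = x) (hσne : (σ : K →+* K) ≠ RingHom.id K)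
    (hσc : ∀ (φ : K →+* ℂ) (x : K), φ (σ x) = starRingEnd ℂ (φ x))
    (Φ : Finset (K →+* ℂ))
    (hΦ : ∀ φ : K →+* ℂ, Xor' (φ ∈ Φ) (φ.comp (σ : K →+* K) ∈ Φ))
    (ζ : K) (hζ0 : ζ ≠ 0) (hζσ : σ ζ = -ζ)
    (hζpos : ∀ φ ∈ Φ, 0 < ((φ ζ) * Complex.I).re ∧ ((φ ζ) * Complex.I).im = 0)
    (I Ibar : FractionalIdeal (nonZeroDivisors (𝓞 K)) K)
    (hIbar : ∀ x : K, x ∈ Ibar ↔ ∃ y ∈ I, σ y = x)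
    (hdiff : FractionalIdeal.spanSingleton (nonZeroDivisors (𝓞 K)) ζ * I * Ibar =
        ((differentIdeal ℤ (𝓞 K) : Ideal (𝓞 K)) :
            FractionalIdeal (nonZeroDivisors (𝓞 K)) K)⁻¹) :
    -- λ is alternating:
    (∀ x : K, Algebra.trace ℚ K (ζ * x * σ x) = 0) ∧
    -- λ is integral on I × I and the dual lattice of I equals I:
    (∀ x : K, (∀ y ∈ I, ∃ n : ℤ, Algebra.trace ℚ K (ζ * x * σ y) = (n : ℚ)) ↔ x ∈ I) ∧
    -- positivity of λ(i·x, x):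
    (∀ x : K, x ≠ 0 → 0 < 2 * ∑ φ ∈ Φ, (-(φ ζ).im) * Complex.normSq (φ x)) := by
  -- σ as a ℚ-algebra equivalence
  have hσQ : ∀ q : ℚ, σ (algebraMap ℚ K q) = algebraMap ℚ K q := by
    intro q
    simp [show (algebraMap ℚ K q) = (q : K) from (eq_ratCast (algebraMap ℚ K) q)]
  let e : K ≃ₐ[ℚ] K := AlgEquiv.ofRingEquiv hσQ
  have htr : ∀ a : K, Algebra.trace ℚ K (σ a) = Algebra.trace ℚ K a := fun a =>
    Algebra.trace_eq_of_algEquiv e a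
  -- part 1
  have part1 : ∀ x : K, Algebra.trace ℚ K (ζ * x * σ x) = 0 := by
    intro x
    have h := htr (ζ * x * σ x)
    rw [show σ (ζ * x * σ x) = -(ζ * x * σ x) by
      rw [map_mul, map_mul, hζσ, hσ2]; ring, map_neg] at h
    linarith
  -- the dual fractional ideal
  have hDual : ((differentIdeal ℤ (𝓞 K) : Ideal (𝓞 K)) :
      FractionalIdeal (nonZeroDivisors (𝓞 K)) K)⁻¹ = FractionalIdeal.dual ℤ ℚ 1 := by
    rw [coeIdeal_differentIdeal ℤ ℚ K (𝓞 K), inv_inv]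
  have hD0 : FractionalIdeal.dual ℤ ℚ (1 : FractionalIdeal (nonZeroDivisors (𝓞 K)) K) ≠ 0 :=
    FractionalIdeal.dual_ne_zero ℤ ℚ one_ne_zero
  rw [hDual] at hdiff
  have hIbar0 : Ibar ≠ 0 := by
    intro h; rw [h, mul_zero] at hdiff; exact hD0 hdiff.symm
  have hI0 : I ≠ 0 := by
    intro h; rw [h, mul_zero, zero_mul] at hdiff; exact hD0 hdiff.symm
  have hζs0 : FractionalIdeal.spanSingleton (nonZeroDivisors (𝓞 K)) ζ ≠ 0 :=
    FractionalIdeal.spanSingleton_ne_zero_iff.mpr hζ0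
  -- σ preserves integrality
  have h10 : (1 : FractionalIdeal (nonZeroDivisors (𝓞 K)) K) ≠ 0 := by
    intro h
    have := FractionalIdeal.one_mem_one (nonZeroDivisors (𝓞 K)) (P := K)
    rw [h] at this
    simp at this
  have hσint : ∀ b : 𝓞 K, IsIntegral ℤ (σ (b : K)) := fun b =>
    (RingOfIntegers.isIntegral_coe b).map σ.toRingHom.toIntAlgHom
  have part2 : ∀ x : K,
      (∀ y ∈ I, ∃ n : ℤ, Algebra.trace ℚ K (ζ * x * σ y) = (n : ℚ)) ↔ x ∈ I := by
    intro x
    constructor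
    · intro h
      -- spanSingleton (ζ*x) * Ibar ≤ dual
      have hle : FractionalIdeal.spanSingleton (nonZeroDivisors (𝓞 K)) (ζ * x) * Ibar ≤
          FractionalIdeal.dual ℤ ℚ 1 := by
        rw [FractionalIdeal.mul_le]
        intro i hi j hj
        obtain ⟨u, hu⟩ := (FractionalIdeal.mem_spanSingleton _).mp hi
        obtain ⟨y, hy, hyj⟩ := (hIbar j).mp hj
        rw [FractionalIdeal.mem_dual (I := 1) h10]
        intro a ha
        obtain ⟨c, hc⟩ := (FractionalIdeal.mem_one_iff _).mp ha
        set c' : 𝓞 K := ⟨σ ((u * c : 𝓞 K) : K), hσint _⟩ with hc'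
        have hy' : c' • y ∈ I := by
          rw [← FractionalIdeal.mem_coe] at hy ⊢
          exact Submodule.smul_mem _ c' hy
        obtain ⟨n, hn⟩ := h _ hy'
        have heq : ζ * x * σ (c' • y) = i * j * a := by
          have : σ (c' • y) = ((u * c : 𝓞 K) : K) * σ y := by
            rw [Algebra.smul_def, map_mul]
            congr 1
            · exact hσ2 _
          rw [this, ← hu, ← hyj, ← hc, Algebra.smul_def]
          push_cast
          ring
        rw [Algebra.traceForm_apply, ← heq, hn]
        exact RingHom.mem_range.mpr ⟨n, by simp⟩
      rw [show FractionalIdeal.spanSingleton (nonZeroDivisors (𝓞 K)) (ζ * x) =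
            FractionalIdeal.spanSingleton (nonZeroDivisors (𝓞 K)) ζ *
              FractionalIdeal.spanSingleton (nonZeroDivisors (𝓞 K)) x from
          (FractionalIdeal.spanSingleton_mul_spanSingleton ζ x).symm, ← hdiff] at hle
      have h1 := mul_le_mul_left hle Ibar⁻¹
      simp only [mul_assoc, mul_inv_cancel₀ hIbar0, mul_one] at h1
      have h2 := mul_le_mul_right h1 (FractionalIdeal.spanSingleton (nonZeroDivisors (𝓞 K)) ζ)⁻¹
      simp only [← mul_assoc, inv_mul_cancel₀ hζs0, one_mul] at h2
      exact h2 (FractionalIdeal.mem_spanSingleton_self _ x)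
    · intro hx y hy
      have hmem : ζ * x * σ y ∈ FractionalIdeal.dual ℤ ℚ
          (1 : FractionalIdeal (nonZeroDivisors (𝓞 K)) K) := by
        rw [← hdiff]
        exact FractionalIdeal.mul_mem_mul
          (FractionalIdeal.mul_mem_mul (FractionalIdeal.mem_spanSingleton_self _ ζ) hx)
          ((hIbar (σ y)).mpr ⟨y, hy, rfl⟩)
      have := (FractionalIdeal.mem_dual (I := 1) h10).mp hmem 1
        ((FractionalIdeal.mem_one_iff _).mpr ⟨1, map_one _⟩)
      rw [Algebra.traceForm_apply, mul_one] at this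
      obtain ⟨n, hn⟩ := RingHom.mem_range.mp this
      exact ⟨n, by rw [← hn]; simp⟩
  refine ⟨part1, part2, ?_⟩
  -- part 3
  intro x hx
  obtain ⟨φ₀⟩ : Nonempty (K →+* ℂ) := inferInstance
  have hne : Φ.Nonempty := by
    rcases hΦ φ₀ with ⟨h1, _⟩ | ⟨h1, _⟩
    exacts [⟨φ₀, h1⟩, ⟨_, h1⟩]
  have h2 : (0:ℝ) < 2 := by norm_num
  refine mul_pos h2 (Finset.sum_pos (fun φ hφ => ?_) hne)
  obtain ⟨hpos, _⟩ := hζpos φ hφ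
  have h1 : 0 < -(φ ζ).im := by
    simpa [Complex.mul_re] using hpos
  exact mul_pos h1 (Complex.normSq_pos.mpr (map_ne_zero φ |>.mpr hx))
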